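/- arXiv:2209.04858 — 2 statements merged into one kernel-verified Lean document; each statement's English description precedes it below -/
import Mathlib

section
/- Let j ≥ 1, let n_1,…,n_j be integers with 1 ≤ n_1 < n_2 < ⋯ < n_j, and let 0 ≤ u_0 ≤ u_1 ≤ ⋯ ≤ u_j ≤ 1 be real numbers. Then ∫_{D(u_0,…,u_j)} F(0,t_1,…,t_j ; n_1,…,n_j) · (dt_1/t_1)⋯(dt_j/t_j) = (1/(n_1⋯n_j)) · F(u_0,…,u_j ; n_1,…,n_j). -/
/-!
Expanding `F(0, t₁, …, t_j)` along its first column, the integrand becomes `det (t_b^{n_a - 1})`,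
whose `b`-th column depends on `t_b` alone. Fubini on the box `D` therefore turns the integral into
the determinant of the one-dimensional integrals `∫_{u_{b-1}}^{u_b} t^{n_a - 1} dt
= (u_b^{n_a} - u_{b-1}^{n_a}) / n_a`, and subtracting from each column of `F(u₀, …, u_j)` its left
neighbour gives the same matrix up to the row factors `1 / n_a`.
-/

open MeasureTheory

/-- `F(t₀,…,t_j ; n₁,…,n_j)`: the determinant of the `(j+1)×(j+1)` matrix whose first
row is `(1,…,1)` and whose `(a+1)`-st row (`1 ≤ a ≤ j`) is `(t₀^{n_a},…,t_j^{n_a})`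
(indices of `t` and `n` starting from `0`). -/
noncomputable def Fdet (j : ℕ) (t : ℕ → ℝ) (n : ℕ → ℕ) : ℝ :=
  Matrix.det (Matrix.of fun a b : Fin (j + 1) =>
    if a.1 = 0 then (1 : ℝ) else t b.1 ^ n (a.1 - 1))

namespace Matrix

variable {R : Type*} [CommRing R] {k : ℕ}

theorem det_succ_of_column_zero_eq_zero {A : Matrix (Fin (k + 1)) (Fin (k + 1)) R}
    (hA : ∀ i : Fin k, A i.succ 0 = 0) :
    A.det = A 0 0 * (A.submatrix Fin.succ Fin.succ).det := by
  simp [det_succ_column_zero A, Fin.sum_univ_succ, hA]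

theorem det_succ_of_row_zero_eq_zero {A : Matrix (Fin (k + 1)) (Fin (k + 1)) R}
    (hA : ∀ j : Fin k, A 0 j.succ = 0) :
    A.det = A 0 0 * (A.submatrix Fin.succ Fin.succ).det := by
  simp [det_succ_row_zero A, Fin.sum_univ_succ, hA]

end Matrix

section Fubini

variable {ι 𝕜 E : Type*} [Fintype ι] [DecidableEq ι] [RCLike 𝕜] [MeasurableSpace E]

theorem integral_pi_det_eq_det_integral {μ : ι → Measure E} [∀ i, SigmaFinite (μ i)]
    (g : ι → E → 𝕜) (hg : ∀ a b, Integrable (g a) (μ b)) :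
    ∫ x, (Matrix.of fun a b => g a (x b)).det ∂Measure.pi μ
      = (Matrix.of fun a b => ∫ y, g a y ∂μ b).det := by
  simp_rw [Matrix.det_apply, Matrix.of_apply, Units.smul_def, zsmul_eq_mul]
  rw [integral_finsetSum _ fun σ _ =>
    (Integrable.fintype_prod fun b => hg (σ b) b).const_mul _]
  refine Finset.sum_congr rfl fun σ _ => ?_
  rw [integral_const_mul, integral_fintype_prod_eq_prod (fun b => g (σ b))]

end Fubini

theorem inv_mul_pow_ae_eq_pow_pred {n : ℕ} (hn : n ≠ 0) :
    (fun x : ℝ => x⁻¹ * x ^ n) =ᵐ[volume] fun x => x ^ (n - 1) := by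
  obtain ⟨m, rfl⟩ := Nat.exists_eq_succ_of_ne_zero hn
  filter_upwards [Measure.ae_ne volume 0] with x hx
  rw [Nat.succ_sub_one, pow_succ, mul_comm, mul_inv_cancel_right₀ hx]

theorem integrableOn_inv_mul_pow {n : ℕ} (hn : n ≠ 0) (a b : ℝ) :
    IntegrableOn (fun x : ℝ => x⁻¹ * x ^ n) (Set.Ioo a b) :=
  ((continuous_pow (n - 1)).integrableOn_Icc.mono_set Set.Ioo_subset_Icc_self).congr_fun_ae
    (ae_restrict_of_ae (inv_mul_pow_ae_eq_pow_pred hn).symm)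

theorem setIntegral_Ioo_inv_mul_pow {n : ℕ} (hn : n ≠ 0) {a b : ℝ} (hab : a ≤ b) :
    ∫ x in Set.Ioo a b, x⁻¹ * x ^ n = (n : ℝ)⁻¹ * (b ^ n - a ^ n) := by
  rw [integral_congr_ae (ae_restrict_of_ae (inv_mul_pow_ae_eq_pow_pred hn)),
    ← integral_Ioc_eq_integral_Ioo, ← intervalIntegral.integral_of_le hab, integral_pow,
    Nat.sub_add_cancel (Nat.one_le_iff_ne_zero.2 hn),
    Nat.cast_sub (Nat.one_le_iff_ne_zero.2 hn), Nat.cast_one, sub_add_cancel, div_eq_inv_mul]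

theorem Fdet_eq_det_of_apply_zero {j : ℕ} {t : ℕ → ℝ} {n : ℕ → ℕ} (ht : t 0 = 0)
    (hn : ∀ a < j, n a ≠ 0) :
    Fdet j t n = (Matrix.of fun a b : Fin j => t (b.1 + 1) ^ n a).det := by
  rw [Fdet, Matrix.det_succ_of_column_zero_eq_zero fun i => by simp [ht, hn i i.isLt]]
  simp [Matrix.submatrix]

theorem Fdet_eq_det_sub (j : ℕ) (t : ℕ → ℝ) (n : ℕ → ℕ) :
    Fdet j t n = (Matrix.of fun a b : Fin j => t (b.1 + 1) ^ n a - t b.1 ^ n a).det := by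
  set A : Matrix (Fin (j + 1)) (Fin (j + 1)) ℝ := Matrix.of fun a b =>
    if a.1 = 0 then 1 else t b.1 ^ n (a.1 - 1)
  let B : Matrix (Fin (j + 1)) (Fin (j + 1)) ℝ := Matrix.of fun a b =>
    Fin.cases (A a 0) (fun b => A a b.succ - A a b.castSucc) b
  have hAB : A.det = B.det :=
    Matrix.det_eq_of_forall_col_eq_smul_add_pred (fun _ => 1) (fun _ => rfl)
      fun _ _ => by simp [B]
  rw [Fdet, hAB, Matrix.det_succ_of_row_zero_eq_zero fun b => by simp [B, A]]
  simp [B, A, Matrix.submatrix]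

theorem lemma2_1_general (j : ℕ) (n : ℕ → ℕ) (u : ℕ → ℝ)
    (hn0 : 0 < n 0) (hn : ∀ i, i + 1 < j → n i < n (i + 1))
    (hum : ∀ i < j, u i ≤ u (i + 1)) :
    (∫ t : Fin j → ℝ in {t | ∀ i : Fin j, u i.1 < t i ∧ t i < u (i.1 + 1)},
        Fdet j (fun i => if i = 0 then (0 : ℝ) else
          if h : i - 1 < j then t ⟨i - 1, h⟩ else 0) n * ∏ i, (t i)⁻¹)
      = (∏ i ∈ Finset.range j, (n i : ℝ))⁻¹ * Fdet j u n := by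
  have hn_ne : ∀ a < j, n a ≠ 0
    | 0, _ => hn0.ne'
    | a + 1, ha => (hn a ha).ne_bot
  have hbox : {t : Fin j → ℝ | ∀ i : Fin j, u i.1 < t i ∧ t i < u (i.1 + 1)}
      = Set.univ.pi fun i => Set.Ioo (u i.1) (u (i.1 + 1)) := by
    ext t; simp [Set.mem_pi]
  have hintegrand : ∀ t : Fin j → ℝ,
      Fdet j (fun i => if i = 0 then (0 : ℝ) else
          if h : i - 1 < j then t ⟨i - 1, h⟩ else 0) n * ∏ i, (t i)⁻¹
        = (Matrix.of fun a b : Fin j => (t b)⁻¹ * t b ^ n a).det := by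
    intro t
    rw [Fdet_eq_det_of_apply_zero rfl hn_ne, mul_comm, ← Matrix.det_mul_row]
    simp
  simp_rw [hbox, hintegrand, volume_pi, Measure.restrict_pi_pi]
  rw [integral_pi_det_eq_det_integral (fun (a : Fin j) (y : ℝ) => y⁻¹ * y ^ n a)
    fun a _ => integrableOn_inv_mul_pow (hn_ne a a.isLt) _ _]
  simp_rw [setIntegral_Ioo_inv_mul_pow (hn_ne _ (Fin.isLt _)) (hum _ (Fin.isLt _))]
  rw [Fdet_eq_det_sub, ← Fin.prod_univ_eq_prod_range, ← Finset.prod_inv_distrib,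
    ← Matrix.det_mul_column]
  rfl

/-- **Lemma 2, first identity.** For integers `1 ≤ n₁ < ⋯ < n_j` and reals
`0 ≤ u₀ ≤ ⋯ ≤ u_j ≤ 1`,
`∫_{D(u₀,…,u_j)} F(0,t₁,…,t_j ; n₁,…,n_j) dt₁/t₁ ⋯ dt_j/t_j
  = (n₁⋯n_j)⁻¹ · F(u₀,…,u_j ; n₁,…,n_j)`. -/
theorem lemma2_1 (j : ℕ) (hj : 1 ≤ j) (n : ℕ → ℕ) (u : ℕ → ℝ)
    (hn0 : 0 < n 0) (hn : ∀ i, i + 1 < j → n i < n (i + 1))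
    (hu0 : 0 ≤ u 0) (hum : ∀ i < j, u i ≤ u (i + 1)) (huj : u j ≤ 1) :
    (∫ t : Fin j → ℝ in {t | ∀ i : Fin j, u i.1 < t i ∧ t i < u (i.1 + 1)},
        Fdet j (fun i => if i = 0 then (0 : ℝ) else
          if h : i - 1 < j then t ⟨i - 1, h⟩ else 0) n * ∏ i, (t i)⁻¹)
      = (∏ i ∈ Finset.range j, (n i : ℝ))⁻¹ * Fdet j u n :=
  lemma2_1_general j n u hn0 hn hum
end

section
/- Let j ≥ 1, let n_1,…,n_j be integers with 1 ≤ n_1 < n_2 < ⋯ < n_j, and let 0 ≤ u_0 ≤ u_1 ≤ ⋯ ≤ u_j ≤ 1 be real numbers. Then ∫_{D(u_0,…,u_j)} F(t_1,…,t_j,1 ; n_1,…,n_j) · (dt_1/(1−t_1))⋯(dt_j/(1−t_j)) = Σ_{(m_1,…,m_j)} (1/(m_1⋯m_j)) · F(u_0,…,u_j ; m_1,…,m_j), where the finite sum is over all integer tuples (m_1,…,m_j) satisfying 0 < m_1 ≤ n_1 < m_2 ≤ n_2 < ⋯ ≤ n_{j−1} < m_j ≤ n_j (i.e. (m_1,…,m_j)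 ∈ X(0,n_1,…,n_j)). -/
/-!
Both sides equal the `j × j` determinant `det [∑_{0 < m ≤ n_a} (u_{c+1}^m - u_c^m) / m]_{a,c}`.

Left side: since `t_j = 1`, subtracting the last column from the others turns
`F(t₁,…,t_j,1 ; n)` into `det [1 - t_c^{n_a}]`, and dividing column `c` by `1 - t_c` leaves the
geometric sums `∑_{i < n_a} t_c^i`. Column `c` now depends on `t_c` alone, so by Fubini the
integral over the box `D(u)` is computed column by column.

Right side: successive differences of columns turn `F(u ; m)` into
`det [u_{c+1}^{m_a} - u_c^{m_a}]`. Row `a` depends on `m_a` alone and `X(0,n)` is the product of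
the ranges `(n_{a-1}, n_a]`, so by multilinearity the sum over `X(0,n)` is the determinant with
row sums over these ranges; adding to each row all the previous ones extends the ranges to
`(0, n_a]`.
-/

open MeasureTheory Finset

namespace Matrix

variable {R : Type*} [CommRing R]

theorem det_cons_one_eq_det_succ_sub_castSucc {k : ℕ} (M : Fin k → Fin (k + 1) → R) :
    (of (Fin.cons (fun _ => 1) M : Fin (k + 1) → Fin (k + 1) → R)).det
      = (of fun a c : Fin k => M a c.succ - M a c.castSucc).det := by
  set A := of (Fin.cons (fun _ => 1) M : Fin (k + 1) → Fin (k + 1) → R)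
  set B : Matrix (Fin (k + 1)) (Fin (k + 1)) R :=
    of fun a => Fin.cases (A a 0) fun c => A a c.succ - A a c.castSucc
  have hAB : A.det = B.det :=
    det_eq_of_forall_col_eq_smul_add_pred (fun _ => 1) (fun _ => rfl) fun a c => by simp [B]
  rw [hAB, det_succ_row_zero, Fin.sum_univ_succ, Finset.sum_eq_zero fun c _ => by simp [A, B]]
  simp [A, B, submatrix]

theorem det_cons_one_eq_det_last_sub {k : ℕ} (M : Fin k → Fin (k + 1) → R) :
    (of (Fin.cons (fun _ => 1) M : Fin (k + 1) → Fin (k + 1) → R)).det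
      = (of fun a c : Fin k => M a (Fin.last k) - M a c.castSucc).det := by
  set A := of (Fin.cons (fun _ => 1) M : Fin (k + 1) → Fin (k + 1) → R)
  set B : Matrix (Fin (k + 1)) (Fin (k + 1)) R :=
    of fun a c => if c = Fin.last k then A a c else A a c - A a (Fin.last k)
  have hAB : A.det = B.det := by
    rw [← det_transpose A, ← det_transpose B]
    refine det_eq_of_forall_row_eq_smul_add_const (fun c => if c = Fin.last k then 0 else 1)
      (Fin.last k) (by simp) fun c a => ?_
    by_cases hc : c = Fin.last k <;> simp [B, hc]
  have hneg : (of fun a c : Fin k => M a (Fin.last k) - M a c.castSucc)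
      = -of fun a c => M a c.castSucc - M a (Fin.last k) := by
    ext; simp
  rw [hAB, det_succ_row_zero, Fin.sum_univ_castSucc,
    Finset.sum_eq_zero fun c _ => by simp [A, B, Fin.castSucc_ne_last], hneg, det_neg,
    Fintype.card_fin]
  simp [A, B, submatrix, Fin.castSucc_ne_last]

theorem det_of_sum_eq_sum_piFinset {ι κ : Type*} [Fintype ι] [DecidableEq ι] (s : ι → Finset κ)
    (f : ι → κ → ι → R) :
    (of fun a c => ∑ x ∈ s a, f a x c).det
      = ∑ r ∈ Fintype.piFinset s, (of fun a c => f a (r a) c).det := by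
  have hrows : (of fun a c => ∑ x ∈ s a, f a x c) = fun a => ∑ x ∈ s a, f a x := by
    ext a c
    simp [Finset.sum_apply]
  rw [hrows]
  exact detRowAlternating.toMultilinearMap.map_sum_finset f s

end Matrix

theorem integral_pi_det_eq_det_integral_s8 {ι α 𝕜 : Type*} [Fintype ι] [DecidableEq ι] [RCLike 𝕜]
    [MeasurableSpace α] (μ : ι → Measure α) [∀ i, SigmaFinite (μ i)] (F : ι → ι → α → 𝕜)
    (hF : ∀ a c, Integrable (F a c) (μ c)) :
    ∫ t, (Matrix.of fun a c => F a c (t c)).det ∂Measure.pi μ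
      = (Matrix.of fun a c => ∫ x, F a c x ∂μ c).det := by
  simp only [Matrix.det_apply, Matrix.of_apply, Units.smul_def, zsmul_eq_mul]
  rw [integral_finsetSum _ fun σ _ =>
    (Integrable.fintype_prod fun c => hF (σ c) c).const_mul _]
  refine Finset.sum_congr rfl fun σ _ => ?_
  rw [integral_const_mul, integral_fintype_prod_eq_prod fun c => F (σ c) c]

theorem integral_Ioo_geom_sum {a b : ℝ} (hab : a ≤ b) (N : ℕ) :
    ∫ x in Set.Ioo a b, ∑ i ∈ range N, x ^ i = ∑ m ∈ Ioc 0 N, (m : ℝ)⁻¹ * (b ^ m - a ^ m) := by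
  rw [← integral_Ioc_eq_integral_Ioo, ← intervalIntegral.integral_of_le hab,
    intervalIntegral.integral_finsetSum fun i _ => intervalIntegral.intervalIntegrable_pow i,
    ← Ico_add_one_add_one_eq_Ioc, ← sum_Ico_add', ← range_eq_Ico]
  refine sum_congr rfl fun i _ => ?_
  rw [integral_pow]
  push_cast
  ring

theorem Fdet_eq_det_cons (j : ℕ) (t : ℕ → ℝ) (n : ℕ → ℕ) :
    Fdet j t n = (Matrix.of (Fin.cons (fun _ => 1) fun (a : Fin j) (b : Fin (j + 1)) =>
      t b ^ n a : Fin (j + 1) → Fin (j + 1) → ℝ)).det := by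
  unfold Fdet
  congr 1
  ext a b
  cases a using Fin.cases <;> simp

theorem Fdet_eq_det_succ_sub (j : ℕ) (t : ℕ → ℝ) (n : ℕ → ℕ) :
    Fdet j t n = (Matrix.of fun a c : Fin j => t (c + 1) ^ n a - t c ^ n a).det := by
  rw [Fdet_eq_det_cons, Matrix.det_cons_one_eq_det_succ_sub_castSucc]
  simp

theorem Fdet_eq_det_last_sub (j : ℕ) (t : ℕ → ℝ) (n : ℕ → ℕ) :
    Fdet j t n = (Matrix.of fun a c : Fin j => t j ^ n a - t c ^ n a).det := by
  rw [Fdet_eq_det_cons, Matrix.det_cons_one_eq_det_last_sub]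
  simp

theorem Fdet_extend_one_mul_prod_inv_eq_det_geom_sum {j : ℕ} (n : ℕ → ℕ) (t : Fin j → ℝ)
    (ht : ∀ c, t c ≠ 1) :
    Fdet j (fun i => if h : i < j then t ⟨i, h⟩ else 1) n * ∏ c, (1 - t c)⁻¹
      = (Matrix.of fun a c : Fin j => ∑ i ∈ range (n a), t c ^ i).det := by
  have hne : ∏ c, (1 - t c) ≠ 0 := prod_ne_zero_iff.2 fun c _ => sub_ne_zero.2 (ht c).symm
  rw [Fdet_eq_det_last_sub]
  simp only [lt_irrefl, dite_false, Fin.is_lt, dite_true, one_pow, Fin.eta, ← mul_neg_geom_sum]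
  have hrow := Matrix.det_mul_row (fun c => 1 - t c)
    (Matrix.of fun a c : Fin j => ∑ i ∈ range (n a), t c ^ i)
  simp only [Matrix.of_apply] at hrow
  rw [hrow, prod_inv_distrib, mul_comm, ← mul_assoc, inv_mul_cancel₀ hne, one_mul]

theorem setIntegral_Fdet_extend_one_eq_det {j : ℕ} (n : ℕ → ℕ) (u : ℕ → ℝ)
    (hu : ∀ i < j, u i ≤ u (i + 1)) :
    (∫ t : Fin j → ℝ in {t | ∀ i : Fin j, u i.1 < t i ∧ t i < u (i.1 + 1)},
        Fdet j (fun i => if h : i < j then t ⟨i, h⟩ else 1) n * ∏ i, (1 - t i)⁻¹)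
      = (Matrix.of fun a c : Fin j =>
          ∑ m ∈ Ioc 0 (n a), (m : ℝ)⁻¹ * (u (c + 1) ^ m - u c ^ m)).det := by
  have hbox : {t : Fin j → ℝ | ∀ i : Fin j, u i < t i ∧ t i < u (i + 1)}
      = Set.univ.pi fun c : Fin j => Set.Ioo (u c) (u (c + 1)) := by
    ext
    simp [Set.mem_pi]
  have hsing : ∀ᵐ t : Fin j → ℝ, ∀ c, t c ≠ 1 :=
    ae_all_iff.2 fun c => Measure.ae_eval_ne _ c 1
  rw [hbox, setIntegral_congr_ae (MeasurableSet.univ_pi fun _ => measurableSet_Ioo)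
      (hsing.mono fun t ht _ => Fdet_extend_one_mul_prod_inv_eq_det_geom_sum n t ht),
    volume_pi, Measure.restrict_pi_pi,
    integral_pi_det_eq_det_integral_s8 _ fun (a : Fin j) _ x => ∑ i ∈ range (n a), x ^ i]
  · congr 1
    ext a c
    exact integral_Ioo_geom_sum (hu c c.2) (n a)
  · intro a c
    exact (continuous_finsetSum _ fun i _ => continuous_pow i).integrableOn_Icc.mono_set
      Set.Ioo_subset_Icc_self

theorem prod_inv_mul_Fdet_extend_zero_eq_det {j : ℕ} (u : ℕ → ℝ) (r : Fin j → ℕ) :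
    (∏ i ∈ range j, ((if h : i < j then r ⟨i, h⟩ else 0 : ℕ) : ℝ))⁻¹
        * Fdet j u (fun i => if h : i < j then r ⟨i, h⟩ else 0)
      = (Matrix.of fun a c : Fin j =>
          (r a : ℝ)⁻¹ * (u (c + 1) ^ r a - u c ^ r a)).det := by
  have hcol := Matrix.det_mul_column (fun a => (r a : ℝ)⁻¹)
    (Matrix.of fun a c : Fin j => u (c + 1) ^ r a - u c ^ r a)
  simp only [Matrix.of_apply] at hcol
  rw [hcol, Fdet_eq_det_succ_sub, ← Fin.prod_univ_eq_prod_range, prod_inv_distrib]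
  simp

theorem det_sum_Ioc_eq_det_sum_Ioc_zero {R : Type*} [CommRing R] {k : ℕ} (n : ℕ → ℕ)
    (hn : ∀ i, i + 1 < k + 1 → n i ≤ n (i + 1)) (f : ℕ → Fin (k + 1) → R) :
    (Matrix.of fun a c : Fin (k + 1) =>
        ∑ x ∈ Ioc ((Fin.cons 0 fun i : Fin k => n i : Fin (k + 1) → ℕ) a) (n a), f x c).det
      = (Matrix.of fun a c : Fin (k + 1) => ∑ x ∈ Ioc 0 (n a), f x c).det := by
  symm
  refine Matrix.det_eq_of_forall_row_eq_smul_add_pred (fun _ => 1) (fun c => by simp) fun i c => ?_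
  simp only [Matrix.of_apply, Fin.cons_succ, Fin.val_succ, Fin.val_castSucc, one_mul]
  rw [← sum_Ioc_consecutive (fun x => f x c) (Nat.zero_le (n i)) (hn i (by omega)), add_comm]

theorem tsum_subtype_eq_sum_piFinset_Ioc {M : Type*} [AddCommMonoid M] [TopologicalSpace M]
    {k : ℕ} (n : ℕ → ℕ) (g : (ℕ → ℕ) → M) :
    ∑' m : {m : ℕ → ℕ // 0 < m 0 ∧ (∀ i < k + 1, m i ≤ n i) ∧
        (∀ i, i + 1 < k + 1 → n i < m (i + 1)) ∧ ∀ i, k + 1 ≤ i → m i = 0}, g m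
      = ∑ r ∈ Fintype.piFinset fun a : Fin (k + 1) =>
          Ioc ((Fin.cons 0 fun i : Fin k => n i : Fin (k + 1) → ℕ) a) (n a),
        g fun i => if h : i < k + 1 then r ⟨i, h⟩ else 0 := by
  set box := Fintype.piFinset fun a : Fin (k + 1) =>
    Ioc ((Fin.cons 0 fun i : Fin k => n i : Fin (k + 1) → ℕ) a) (n a)
  set extend : (Fin (k + 1) → ℕ) ↪ (ℕ → ℕ) :=
    ⟨fun r i => if h : i < k + 1 then r ⟨i, h⟩ else 0,
      fun r r' h => funext fun a => by simpa [Fin.is_le] using congrFun h a⟩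
  have extend_lt r i (h : i < k + 1) : extend r i = r ⟨i, h⟩ := dif_pos h
  have extend_ge r i (h : k + 1 ≤ i) : extend r i = 0 := dif_neg (by omega)
  have hmem : ∀ m, (0 < m 0 ∧ (∀ i < k + 1, m i ≤ n i) ∧
      (∀ i, i + 1 < k + 1 → n i < m (i + 1)) ∧ ∀ i, k + 1 ≤ i → m i = 0) ↔
      m ∈ box.map extend := by
    intro m
    simp only [box, mem_map, Fintype.mem_piFinset, mem_Ioc]
    constructor
    · rintro ⟨h0, hle, hlt, hzero⟩
      refine ⟨fun a => m a, fun a => ?_, funext fun i => ?_⟩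
      · cases a using Fin.cases with
        | zero => exact ⟨h0, hle 0 (by omega)⟩
        | succ i => simpa using ⟨hlt i (by omega), hle (i + 1) (by omega)⟩
      · by_cases h : i < k + 1
        · exact extend_lt _ i h
        · rw [extend_ge _ i (by omega), hzero i (by omega)]
    · rintro ⟨r, hr, rfl⟩
      refine ⟨?_, fun i hi => ?_, fun i hi => ?_, extend_ge r⟩
      · simpa [extend_lt r 0 (by omega)] using (hr 0).1
      · simpa [extend_lt r i hi] using (hr ⟨i, hi⟩).2
      · rw [extend_lt r (i + 1) hi]
        exact (hr (Fin.succ ⟨i, by omega⟩)).1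
  calc _ = ∑ m ∈ box.map extend, g m :=
        (tsum_congr_set_coe g (Set.ext hmem)).trans (Finset.tsum_subtype _ g)
    _ = _ := sum_map _ _ _

theorem tsum_prod_inv_mul_Fdet_eq_det {j : ℕ} (hj : 1 ≤ j) (n : ℕ → ℕ)
    (hn : ∀ i, i + 1 < j → n i < n (i + 1)) (u : ℕ → ℝ) :
    ∑' m : {m : ℕ → ℕ // 0 < m 0 ∧ (∀ i < j, m i ≤ n i) ∧
          (∀ i, i + 1 < j → n i < m (i + 1)) ∧ ∀ i, j ≤ i → m i = 0},
        (∏ i ∈ range j, (m.1 i : ℝ))⁻¹ * Fdet j u m.1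
      = (Matrix.of fun a c : Fin j =>
          ∑ m ∈ Ioc 0 (n a), (m : ℝ)⁻¹ * (u (c + 1) ^ m - u c ^ m)).det := by
  obtain ⟨k, rfl⟩ : ∃ k, j = k + 1 := ⟨j - 1, by omega⟩
  rw [tsum_subtype_eq_sum_piFinset_Ioc n fun m =>
    (∏ i ∈ range (k + 1), (m i : ℝ))⁻¹ * Fdet (k + 1) u m]
  simp_rw [prod_inv_mul_Fdet_extend_zero_eq_det]
  rw [← Matrix.det_of_sum_eq_sum_piFinset _ fun (_ : Fin (k + 1)) (x : ℕ) (c : Fin (k + 1)) =>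
      (x : ℝ)⁻¹ * (u (c + 1) ^ x - u c ^ x),
    det_sum_Ioc_eq_det_sum_Ioc_zero n fun i hi => (hn i hi).le]

theorem lemma2_4_general (j : ℕ) (hj : 1 ≤ j) (n : ℕ → ℕ) (u : ℕ → ℝ)
    (hn : ∀ i, i + 1 < j → n i < n (i + 1))
    (hum : ∀ i < j, u i ≤ u (i + 1)) :
    (∫ t : Fin j → ℝ in {t | ∀ i : Fin j, u i.1 < t i ∧ t i < u (i.1 + 1)},
        Fdet j (fun i => if h : i < j then t ⟨i, h⟩ else 1) n * ∏ i, (1 - t i)⁻¹)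
      = ∑' m : {m : ℕ → ℕ // 0 < m 0 ∧ (∀ i < j, m i ≤ n i) ∧
            (∀ i, i + 1 < j → n i < m (i + 1)) ∧ ∀ i, j ≤ i → m i = 0},
          (∏ i ∈ Finset.range j, (m.1 i : ℝ))⁻¹ * Fdet j u m.1 := by
  rw [setIntegral_Fdet_extend_one_eq_det n u hum, tsum_prod_inv_mul_Fdet_eq_det hj n hn u]

/-- **Lemma 2, fourth identity.** For integers `1 ≤ n₁ < ⋯ < n_j` and reals
`0 ≤ u₀ ≤ ⋯ ≤ u_j ≤ 1`,
`∫_{D(u₀,…,u_j)} F(t₁,…,t_j,1 ; n₁,…,n_j) dt₁/(1-t₁) ⋯ dt_j/(1-t_j)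
  = Σ_{(m₁,…,m_j) ∈ X(0,n₁,…,n_j)} (m₁⋯m_j)⁻¹ · F(u₀,…,u_j ; m₁,…,m_j)`
(the summation tuples are normalized by `m i = 0` for `i ≥ j`). -/
theorem lemma2_4 (j : ℕ) (hj : 1 ≤ j) (n : ℕ → ℕ) (u : ℕ → ℝ)
    (hn0 : 0 < n 0) (hn : ∀ i, i + 1 < j → n i < n (i + 1))
    (hu0 : 0 ≤ u 0) (hum : ∀ i < j, u i ≤ u (i + 1)) (huj : u j ≤ 1) :
    (∫ t : Fin j → ℝ in {t | ∀ i : Fin j, u i.1 < t i ∧ t i < u (i.1 + 1)},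
        Fdet j (fun i => if h : i < j then t ⟨i, h⟩ else 1) n * ∏ i, (1 - t i)⁻¹)
      = ∑' m : {m : ℕ → ℕ // 0 < m 0 ∧ (∀ i < j, m i ≤ n i) ∧
            (∀ i, i + 1 < j → n i < m (i + 1)) ∧ ∀ i, j ≤ i → m i = 0},
          (∏ i ∈ Finset.range j, (m.1 i : ℝ))⁻¹ * Fdet j u m.1 :=
  lemma2_4_general j hj n u hn hum
end
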